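/- Let (Ω, F, P) be a probability space, p ≥ 2, T > 0, and 1/4 < α ≤ β < 1/2. Let G_t(x) = (1/2)·1_{{|x|<t}} be the fundamental solution of the one-dimensional wave equation, and let Y : [0,T] × ℝ × Ω → ℝ be jointly measurable. For H ∈ (1/4, 1/2) define ‖Y‖_{χᵖ₁} = sup_{(t,x) ∈ [0,T]×ℝ} (E[|Y(t,x)|ᵖ])^{1/p} and ‖Y‖_{χᵖ_{H,2}} = sup_{(t,x) ∈ [0,T]×ℝ} ( (H(1−2H)/2) ∫₀^t ∫_ℝ ∫_ℝ G_{t−s}(x−y)² · (E[|Y(s,y) − Y(s,z)|ᵖ])^{2/p} · |y−z|^{2H−2} dy dz ds )^{1/2}, and ‖Y‖_{χᵖ_H} = ‖Y‖_{χᵖ₁} + ‖Y‖_{χᵖ_{H,2}}. Then there exist constants C and C̃, depending only on p and T, such that ‖Y‖_{χᵖ_β} ≤ C · ‖Y‖_{χᵖ_α} and, more strongly, sup_{β' ∈ [α, 1/2)} ‖Y‖_{χᵖ_{β',2}} ≤ C̃ · ‖Y‖_{χᵖ_α}. -/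

import Mathlib

open MeasureTheory Real Set ENNReal

/-- The fundamental solution of the one-dimensional wave equation. -/
noncomputable def waveKernel (t x : ℝ) : ℝ := if |x| < t then 1 / 2 else 0

/-- The `L^p`-part `‖Y‖_{χᵖ₁}` of the norm of the space `χᵖ_H`, valued in `[0,∞]`. -/
noncomputable def chiNormOne {Ω : Type*} [MeasurableSpace Ω] (P : Measure Ω)
    (p T : ℝ) (Y : ℝ → ℝ → Ω → ℝ) : ℝ≥0∞ :=
  ⨆ t ∈ Set.Icc (0 : ℝ) T, ⨆ x : ℝ,
    (∫⁻ ω, ENNReal.ofReal (|Y t x ω| ^ p) ∂P) ^ (1 / p)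

/-- The Gagliardo-type part `‖Y‖_{χᵖ_{H,2}}` of the norm of the space `χᵖ_H`,
for a given space-time kernel `G`, valued in `[0,∞]`. -/
noncomputable def chiNormTwo {Ω : Type*} [MeasurableSpace Ω] (P : Measure Ω)
    (G : ℝ → ℝ → ℝ) (p T H : ℝ) (Y : ℝ → ℝ → Ω → ℝ) : ℝ≥0∞ :=
  ⨆ t ∈ Set.Icc (0 : ℝ) T, ⨆ x : ℝ,
    (ENNReal.ofReal (H * (1 - 2 * H) / 2) *
      ∫⁻ s in Set.Ioc (0 : ℝ) t, ∫⁻ y : ℝ, ∫⁻ z : ℝ,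
        ENNReal.ofReal ((G (t - s) (x - y)) ^ 2) *
          (∫⁻ ω, ENNReal.ofReal (|Y s y ω - Y s z ω| ^ p) ∂P) ^ (2 / p) *
          ENNReal.ofReal (|y - z| ^ (2 * H - 2))) ^ (1 / (2 : ℝ))

/-! ### Auxiliary lemmas -/

private lemma abs_sub_rpow_le {a b p : ℝ} (hp : 0 ≤ p) :
    |a - b| ^ p ≤ 2 ^ p * (|a| ^ p + |b| ^ p) := by
  have h1 : |a - b| ≤ 2 * max |a| |b| := by
    have h2 : |a - b| ≤ |a| + |b| := by
      have := abs_add_le a (-b); rw [abs_neg] at this; simpa [sub_eq_add_neg] using this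
    rcases le_total |a| |b| with h | h
    · rw [max_eq_right h]; linarith
    · rw [max_eq_left h]; linarith
  have h0 : (0:ℝ) ≤ max |a| |b| := le_max_iff.mpr (Or.inl (abs_nonneg a))
  calc |a - b| ^ p ≤ (2 * max |a| |b|) ^ p := Real.rpow_le_rpow (abs_nonneg _) h1 hp
    _ = 2 ^ p * (max |a| |b|) ^ p := Real.mul_rpow (by norm_num) h0
    _ ≤ 2 ^ p * (|a| ^ p + |b| ^ p) := by
        have hm : (max |a| |b|) ^ p ≤ |a| ^ p + |b| ^ p := by
          rcases le_total |a| |b| with h | h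
          · rw [max_eq_right h]; linarith [Real.rpow_nonneg (abs_nonneg a) p]
          · rw [max_eq_left h]; linarith [Real.rpow_nonneg (abs_nonneg b) p]
        exact mul_le_mul_of_nonneg_left hm (by positivity)

/-- Tail integral of `|w| ^ (2β - 2)` outside `[-1, 1]`. -/
private lemma tail_integral_le {β : ℝ} (hβ : β < 1/2) :
    (∫⁻ w : ℝ, (if 1 < |w| then ENNReal.ofReal (|w| ^ (2*β-2)) else 0))
      ≤ ENNReal.ofReal (2 / (1 - 2*β)) := by
  have hb : (0:ℝ) < 1 - 2*β := by linarith
  set f : ℝ → ℝ≥0∞ := fun w => if 1 < w then ENNReal.ofReal (w ^ (2*β-2)) else 0 with hf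
  have hfm : Measurable f := by
    apply Measurable.ite (measurableSet_Ioi (a := (1:ℝ)))
    · exact (measurable_id.pow_const _).ennreal_ofReal
    · exact measurable_const
  have hpt : ∀ w : ℝ, (if 1 < |w| then ENNReal.ofReal (|w| ^ (2*β-2)) else 0) ≤ f w + f (-w) := by
    intro w
    by_cases h : 1 < |w|
    · rcases abs_cases w with ⟨he, _⟩ | ⟨he, _⟩
      · simp only [hf, if_pos h, if_pos (he ▸ h)]
        rw [he]; exact le_add_of_le_of_nonneg le_rfl zero_le
      · have h2 : 1 < -w := he ▸ h
        simp only [hf, if_pos h, if_pos h2]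
        rw [he]; exact le_add_of_nonneg_of_le zero_le le_rfl
    · rw [if_neg h]; exact zero_le
  have hind : ∀ w : ℝ, f w
      = Set.indicator (Set.Ioi (1:ℝ)) (fun w => ENNReal.ofReal (w ^ (2*β-2))) w := by
    intro w; simp only [hf, Set.indicator, Set.mem_Ioi]
  have hval : (∫⁻ w : ℝ, f w) = ENNReal.ofReal (1 / (1 - 2*β)) := by
    rw [lintegral_congr hind, lintegral_indicator measurableSet_Ioi _,
      ← ofReal_integral_eq_lintegral_ofReal]
    · rw [integral_Ioi_rpow_of_lt (by linarith) one_pos, Real.one_rpow]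
      have h0 : 2*β - 1 ≠ 0 := by linarith
      congr 1; field_simp
      rw [show 2 * (β - 1) + 1 = -(1 - 2 * β) by ring, div_neg, neg_neg, div_self hb.ne']
    · exact integrableOn_Ioi_rpow_of_lt (by linarith) one_pos
    · filter_upwards [ae_restrict_mem measurableSet_Ioi] with w hw
      exact Real.rpow_nonneg (by linarith [Set.mem_Ioi.mp hw]) _
  calc (∫⁻ w : ℝ, (if 1 < |w| then ENNReal.ofReal (|w| ^ (2*β-2)) else 0))
      ≤ ∫⁻ w : ℝ, (f w + f (-w)) := lintegral_mono hpt
    _ = (∫⁻ w : ℝ, f w) + ∫⁻ w : ℝ, f (-w) := lintegral_add_right _ (hfm.comp measurable_neg)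
    _ = (∫⁻ w : ℝ, f w) + ∫⁻ w : ℝ, f w := by
        rw [(Measure.measurePreserving_neg (volume : Measure ℝ)).lintegral_comp hfm]
    _ = ENNReal.ofReal (2 / (1 - 2*β)) := by
        rw [hval, ← ENNReal.ofReal_add (by positivity) (by positivity)]
        congr 1; ring

/-- The wave kernel square integral bound. -/
private lemma waveKernel_sq_integral_le {T : ℝ} (u x : ℝ) (hu : u ≤ T) :
    (∫⁻ y : ℝ, ENNReal.ofReal ((waveKernel u (x - y)) ^ 2))
      ≤ ENNReal.ofReal (T / 2) := by
  have hpt : ∀ y : ℝ, ENNReal.ofReal ((waveKernel u (x - y)) ^ 2)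
      = Set.indicator (Set.Ioo (x - u) (x + u)) (fun _ => ENNReal.ofReal (1/4)) y := by
    intro y
    have hmem : y ∈ Set.Ioo (x - u) (x + u) ↔ |x - y| < u := by
      rw [Set.mem_Ioo, abs_sub_lt_iff]
      constructor <;> intro h <;> constructor <;> linarith [h.1, h.2]
    simp only [waveKernel, Set.indicator]
    by_cases h : |x - y| < u
    · rw [if_pos h, if_pos (hmem.mpr h)]; norm_num
    · rw [if_neg h, if_neg (fun hy => h (hmem.mp hy))]; norm_num
  rw [lintegral_congr hpt, lintegral_indicator measurableSet_Ioo, setLIntegral_const,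
    Real.volume_Ioo, ← ENNReal.ofReal_mul (by norm_num)]
  apply ENNReal.ofReal_le_ofReal
  nlinarith [le_abs_self u]

private lemma waveKernel_sq_measurable (u x : ℝ) :
    Measurable (fun y : ℝ => ENNReal.ofReal ((waveKernel u (x - y)) ^ 2)) := by
  apply Measurable.ennreal_ofReal
  apply Measurable.pow_const
  unfold waveKernel
  exact Measurable.ite
    (measurableSet_lt (measurable_const.sub measurable_id).abs measurable_const)
    measurable_const measurable_const

/-- Key estimate: the Gagliardo part at exponent `β` is controlled by the one at
exponent `α` plus the `L^p` part. -/
private lemma chiNormTwo_key {Ω : Type*} [MeasurableSpace Ω] (P : Measure Ω)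
    [IsProbabilityMeasure P] (p T : ℝ) (hp : 2 ≤ p) (hT : 0 < T)
    {α β : ℝ} (hα : 1 / 4 < α) (hab : α ≤ β) (hβ : β < 1 / 2)
    (Y : ℝ → ℝ → Ω → ℝ)
    (hY : Measurable (fun q : (ℝ × ℝ) × Ω => Y q.1.1 q.1.2 q.2)) :
    chiNormTwo P waveKernel p T β Y
      ≤ 2 * chiNormTwo P waveKernel p T α Y
        + ENNReal.ofReal (2 * T) * chiNormOne P p T Y := by
  have hp0 : (0:ℝ) < p := lt_of_lt_of_le two_pos hp
  have hpne : p ≠ 0 := hp0.ne'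
  set N1 := chiNormOne P p T Y with hN1
  set N2a := chiNormTwo P waveKernel p T α Y with hN2a
  -- Step A : uniform moment bound on increments
  have hA : ∀ s ∈ Set.Icc (0:ℝ) T, ∀ y z : ℝ,
      (∫⁻ ω, ENNReal.ofReal (|Y s y ω - Y s z ω| ^ p) ∂P) ^ (2/p)
        ≤ 16 * N1 ^ (2:ℝ) := by
    intro s hs y z
    have hmeasY : ∀ v : ℝ, Measurable (fun ω => Y s v ω) := by
      intro v; exact hY.comp (measurable_prodMk_left (x := ((s, v) : ℝ × ℝ)))
    have h1 : ∀ v : ℝ, (∫⁻ ω, ENNReal.ofReal (|Y s v ω| ^ p) ∂P) ≤ N1 ^ p := by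
      intro v
      have hle : (∫⁻ ω, ENNReal.ofReal (|Y s v ω| ^ p) ∂P) ^ (1/p) ≤ N1 := by
        rw [hN1, chiNormOne]
        exact le_trans
          (le_iSup (fun x => (∫⁻ ω, ENNReal.ofReal (|Y s x ω| ^ p) ∂P) ^ (1/p)) v)
          (le_iSup₂ (f := fun t (_ : t ∈ Set.Icc (0:ℝ) T) =>
            ⨆ x : ℝ, (∫⁻ ω, ENNReal.ofReal (|Y t x ω| ^ p) ∂P) ^ (1/p)) s hs)
      calc (∫⁻ ω, ENNReal.ofReal (|Y s v ω| ^ p) ∂P)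
          = ((∫⁻ ω, ENNReal.ofReal (|Y s v ω| ^ p) ∂P) ^ (1/p)) ^ p := by
            rw [← ENNReal.rpow_mul, one_div, inv_mul_cancel₀ hpne, ENNReal.rpow_one]
        _ ≤ N1 ^ p := ENNReal.rpow_le_rpow hle hp0.le
    have h2 : (∫⁻ ω, ENNReal.ofReal (|Y s y ω - Y s z ω| ^ p) ∂P)
        ≤ (2:ℝ≥0∞) ^ (p+1) * N1 ^ p := by
      have hmz : Measurable fun ω => ENNReal.ofReal (|Y s y ω| ^ p) :=
        (((hmeasY y).abs).pow_const p).ennreal_ofReal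
      calc (∫⁻ ω, ENNReal.ofReal (|Y s y ω - Y s z ω| ^ p) ∂P)
          ≤ ∫⁻ ω, ENNReal.ofReal ((2:ℝ) ^ p)
              * (ENNReal.ofReal (|Y s y ω| ^ p) + ENNReal.ofReal (|Y s z ω| ^ p)) ∂P := by
            apply lintegral_mono; intro ω
            dsimp only
            rw [← ENNReal.ofReal_add (by positivity) (by positivity),
              ← ENNReal.ofReal_mul (by positivity)]
            exact ENNReal.ofReal_le_ofReal (abs_sub_rpow_le hp0.le)
        _ = ENNReal.ofReal ((2:ℝ) ^ p) *
              ((∫⁻ ω, ENNReal.ofReal (|Y s y ω| ^ p) ∂P)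
                + ∫⁻ ω, ENNReal.ofReal (|Y s z ω| ^ p) ∂P) := by
            rw [lintegral_const_mul' _ _ ENNReal.ofReal_ne_top, lintegral_add_left hmz]
        _ ≤ ENNReal.ofReal ((2:ℝ) ^ p) * (N1 ^ p + N1 ^ p) :=
            mul_le_mul_right (add_le_add (h1 y) (h1 z)) _
        _ = (2:ℝ≥0∞) ^ (p+1) * N1 ^ p := by
            rw [← ENNReal.ofReal_rpow_of_pos two_pos, ENNReal.ofReal_ofNat,
              ENNReal.rpow_add _ _ two_ne_zero ENNReal.ofNat_ne_top, ENNReal.rpow_one]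
            ring
    calc (∫⁻ ω, ENNReal.ofReal (|Y s y ω - Y s z ω| ^ p) ∂P) ^ (2/p)
        ≤ ((2:ℝ≥0∞) ^ (p+1) * N1 ^ p) ^ (2/p) :=
          ENNReal.rpow_le_rpow h2 (by positivity)
      _ = (2:ℝ≥0∞) ^ ((p+1) * (2/p)) * N1 ^ (p * (2/p)) := by
          rw [ENNReal.mul_rpow_of_nonneg _ _ (by positivity), ← ENNReal.rpow_mul,
            ← ENNReal.rpow_mul]
      _ ≤ 16 * N1 ^ (2:ℝ) := by
          have he1 : (p+1) * (2/p) ≤ 4 := by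
            have h2p : 2/p ≤ 1 := by rw [div_le_one hp0]; linarith
            have : (p+1) * (2/p) = 2 + 2/p := by field_simp
            rw [this]; linarith
          have he2 : p * (2/p) = 2 := by field_simp
          rw [he2]
          apply mul_le_mul_left
          calc (2:ℝ≥0∞) ^ ((p+1) * (2/p)) ≤ (2:ℝ≥0∞) ^ (4:ℝ) :=
              ENNReal.rpow_le_rpow_of_exponent_le one_le_two he1
            _ = 16 := by
              rw [show (4:ℝ) = ((4:ℕ):ℝ) by norm_num, ENNReal.rpow_natCast]; norm_num
  -- the tail weight function
  set ind : ℝ → ℝ≥0∞ := fun w => if 1 < |w| then ENNReal.ofReal (|w| ^ (2*β-2)) else 0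
    with hind
  have hindMeas : Measurable ind := by
    apply Measurable.ite (measurableSet_lt measurable_const measurable_id.abs)
    · exact (measurable_id.abs.pow_const _).ennreal_ofReal
    · exact measurable_const
  set K : ℝ≥0∞ := ∫⁻ w : ℝ, ind w with hK
  have hKle : K ≤ ENNReal.ofReal (2 / (1 - 2*β)) := tail_integral_le hβ
  have hC : ∀ y : ℝ, (∫⁻ z : ℝ, ind (y - z)) = K :=
    fun y => (Measure.measurePreserving_sub_left volume y).lintegral_comp hindMeas
  set c16 : ℝ≥0∞ := 16 * N1 ^ (2:ℝ) with hc16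
  -- main estimate for fixed (t, x)
  rw [chiNormTwo]
  apply iSup₂_le; intro t ht; apply iSup_le; intro x
  set Ia : ℝ≥0∞ := ∫⁻ s in Set.Ioc (0:ℝ) t, ∫⁻ y : ℝ, ∫⁻ z : ℝ,
      ENNReal.ofReal ((waveKernel (t - s) (x - y)) ^ 2) *
        (∫⁻ ω, ENNReal.ofReal (|Y s y ω - Y s z ω| ^ p) ∂P) ^ (2 / p) *
        ENNReal.ofReal (|y - z| ^ (2 * α - 2)) with hIa
  set V : ℝ≥0∞ := c16 * K * ENNReal.ofReal (T/2) with hV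
  have hstep1 : (∫⁻ s in Set.Ioc (0:ℝ) t, ∫⁻ y : ℝ, ∫⁻ z : ℝ,
      ENNReal.ofReal ((waveKernel (t - s) (x - y)) ^ 2) *
        (∫⁻ ω, ENNReal.ofReal (|Y s y ω - Y s z ω| ^ p) ∂P) ^ (2 / p) *
        ENNReal.ofReal (|y - z| ^ (2 * β - 2)))
      ≤ Ia + V * ENNReal.ofReal T := by
    calc (∫⁻ s in Set.Ioc (0:ℝ) t, ∫⁻ y : ℝ, ∫⁻ z : ℝ,
        ENNReal.ofReal ((waveKernel (t - s) (x - y)) ^ 2) *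
          (∫⁻ ω, ENNReal.ofReal (|Y s y ω - Y s z ω| ^ p) ∂P) ^ (2 / p) *
          ENNReal.ofReal (|y - z| ^ (2 * β - 2)))
        ≤ ∫⁻ s in Set.Ioc (0:ℝ) t, ((∫⁻ y : ℝ, ∫⁻ z : ℝ,
            ENNReal.ofReal ((waveKernel (t - s) (x - y)) ^ 2) *
              (∫⁻ ω, ENNReal.ofReal (|Y s y ω - Y s z ω| ^ p) ∂P) ^ (2 / p) *
              ENNReal.ofReal (|y - z| ^ (2 * α - 2))) + V) := by
          apply setLIntegral_mono' measurableSet_Ioc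
          intro s hs
          have hsT : s ∈ Set.Icc (0:ℝ) T := ⟨hs.1.le, hs.2.trans ht.2⟩
          have hzmeas : ∀ y : ℝ, Measurable fun z : ℝ =>
              (ENNReal.ofReal ((waveKernel (t - s) (x - y)) ^ 2) * c16) * ind (y - z) :=
            fun y => ((hindMeas.comp (measurable_const.sub measurable_id)).const_mul _ :
              Measurable fun z : ℝ =>
                (ENNReal.ofReal ((waveKernel (t - s) (x - y)) ^ 2) * c16) * ind (y - z))
          calc (∫⁻ y : ℝ, ∫⁻ z : ℝ,
              ENNReal.ofReal ((waveKernel (t - s) (x - y)) ^ 2) *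
                (∫⁻ ω, ENNReal.ofReal (|Y s y ω - Y s z ω| ^ p) ∂P) ^ (2 / p) *
                ENNReal.ofReal (|y - z| ^ (2 * β - 2)))
              ≤ ∫⁻ y : ℝ, ∫⁻ z : ℝ,
                (ENNReal.ofReal ((waveKernel (t - s) (x - y)) ^ 2) *
                  (∫⁻ ω, ENNReal.ofReal (|Y s y ω - Y s z ω| ^ p) ∂P) ^ (2 / p) *
                  ENNReal.ofReal (|y - z| ^ (2 * α - 2))
                + (ENNReal.ofReal ((waveKernel (t - s) (x - y)) ^ 2) * c16) * ind (y - z)) := by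
                apply lintegral_mono; intro y; apply lintegral_mono; intro z
                by_cases h : 1 < |y - z|
                · apply le_add_left
                  rw [hind]; simp only [if_pos h]
                  exact mul_le_mul_left (mul_le_mul_right (hA s hsT y z) _) _
                · apply le_add_right
                  apply mul_le_mul_right
                  apply ENNReal.ofReal_le_ofReal
                  rcases eq_or_lt_of_le (abs_nonneg (y - z)) with h0 | h0
                  · rw [← h0, Real.zero_rpow (by linarith), Real.zero_rpow (by linarith)]
                  · exact Real.rpow_le_rpow_of_exponent_ge h0 (not_lt.mp h) (by linarith)
            _ = ∫⁻ y : ℝ, ((∫⁻ z : ℝ,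
                ENNReal.ofReal ((waveKernel (t - s) (x - y)) ^ 2) *
                  (∫⁻ ω, ENNReal.ofReal (|Y s y ω - Y s z ω| ^ p) ∂P) ^ (2 / p) *
                  ENNReal.ofReal (|y - z| ^ (2 * α - 2)))
                + ENNReal.ofReal ((waveKernel (t - s) (x - y)) ^ 2) * (c16 * K)) := by
                apply lintegral_congr; intro y
                have hm2 : Measurable fun z : ℝ => ind (y - z) :=
                  hindMeas.comp (measurable_const.sub measurable_id)
                rw [lintegral_add_right _ (hzmeas y),
                  lintegral_const_mul (ENNReal.ofReal ((waveKernel (t - s) (x - y)) ^ 2) * c16) hm2,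
                  hC y, mul_assoc]
            _ = (∫⁻ y : ℝ, ∫⁻ z : ℝ,
                ENNReal.ofReal ((waveKernel (t - s) (x - y)) ^ 2) *
                  (∫⁻ ω, ENNReal.ofReal (|Y s y ω - Y s z ω| ^ p) ∂P) ^ (2 / p) *
                  ENNReal.ofReal (|y - z| ^ (2 * α - 2)))
                + (∫⁻ y : ℝ, ENNReal.ofReal ((waveKernel (t - s) (x - y)) ^ 2)) * (c16 * K) := by
                rw [lintegral_add_right _ ((waveKernel_sq_measurable _ x).mul_const _),
                  lintegral_mul_const _ (waveKernel_sq_measurable _ x)]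
            _ ≤ (∫⁻ y : ℝ, ∫⁻ z : ℝ,
                ENNReal.ofReal ((waveKernel (t - s) (x - y)) ^ 2) *
                  (∫⁻ ω, ENNReal.ofReal (|Y s y ω - Y s z ω| ^ p) ∂P) ^ (2 / p) *
                  ENNReal.ofReal (|y - z| ^ (2 * α - 2))) + V := by
                apply add_le_add_right
                rw [hV]
                calc (∫⁻ y : ℝ, ENNReal.ofReal ((waveKernel (t - s) (x - y)) ^ 2)) * (c16 * K)
                    ≤ ENNReal.ofReal (T/2) * (c16 * K) := by
                      apply mul_le_mul_left
                      exact waveKernel_sq_integral_le (t - s) x (by linarith [hs.1, ht.2])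
                  _ = c16 * K * ENNReal.ofReal (T/2) := by ring
      _ = Ia + V * volume (Set.Ioc (0:ℝ) t) := by
          rw [lintegral_add_right _ measurable_const, setLIntegral_const, hIa]
      _ ≤ Ia + V * ENNReal.ofReal T := by
          apply add_le_add_right
          apply mul_le_mul_right
          rw [Real.volume_Ioc]
          exact ENNReal.ofReal_le_ofReal (by linarith [ht.2])
  -- multiply by the prefactor and conclude
  have hba : ENNReal.ofReal (β * (1 - 2 * β) / 2) ≤ 2 * ENNReal.ofReal (α * (1 - 2 * α) / 2) := by
    rw [show (2:ℝ≥0∞) = ENNReal.ofReal 2 by simp, ← ENNReal.ofReal_mul (by norm_num)]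
    apply ENNReal.ofReal_le_ofReal
    nlinarith
  have h2a : ENNReal.ofReal (α * (1 - 2 * α) / 2) * Ia ≤ N2a ^ (2:ℝ) := by
    have hle : (ENNReal.ofReal (α * (1 - 2 * α) / 2) * Ia) ^ (1/(2:ℝ)) ≤ N2a := by
      rw [hN2a, chiNormTwo, hIa]
      exact le_trans
        (le_iSup (fun x' => (ENNReal.ofReal (α * (1 - 2 * α) / 2) *
          ∫⁻ s in Set.Ioc (0:ℝ) t, ∫⁻ y : ℝ, ∫⁻ z : ℝ,
            ENNReal.ofReal ((waveKernel (t - s) (x' - y)) ^ 2) *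
              (∫⁻ ω, ENNReal.ofReal (|Y s y ω - Y s z ω| ^ p) ∂P) ^ (2 / p) *
              ENNReal.ofReal (|y - z| ^ (2 * α - 2))) ^ (1/(2:ℝ))) x)
        (le_iSup₂ (f := fun t' (_ : t' ∈ Set.Icc (0:ℝ) T) =>
          ⨆ x' : ℝ, (ENNReal.ofReal (α * (1 - 2 * α) / 2) *
          ∫⁻ s in Set.Ioc (0:ℝ) t', ∫⁻ y : ℝ, ∫⁻ z : ℝ,
            ENNReal.ofReal ((waveKernel (t' - s) (x' - y)) ^ 2) *
              (∫⁻ ω, ENNReal.ofReal (|Y s y ω - Y s z ω| ^ p) ∂P) ^ (2 / p) *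
              ENNReal.ofReal (|y - z| ^ (2 * α - 2))) ^ (1/(2:ℝ))) t ht)
    calc ENNReal.ofReal (α * (1 - 2 * α) / 2) * Ia
        = ((ENNReal.ofReal (α * (1 - 2 * α) / 2) * Ia) ^ (1/(2:ℝ))) ^ (2:ℝ) := by
          rw [← ENNReal.rpow_mul]; norm_num
      _ ≤ N2a ^ (2:ℝ) := ENNReal.rpow_le_rpow hle (by norm_num)
  have hVT : ENNReal.ofReal (β * (1 - 2 * β) / 2) * (V * ENNReal.ofReal T)
      ≤ (ENNReal.ofReal (2*T) * N1) ^ (2:ℝ) := by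
    have hbb : (0:ℝ) < 1 - 2*β := by linarith
    have h4 : (ENNReal.ofReal (2*T) * N1) ^ (2:ℝ)
        = N1 ^ (2:ℝ) * ENNReal.ofReal (4*T^2) := by
      rw [ENNReal.mul_rpow_of_nonneg _ _ (by norm_num),
        ENNReal.ofReal_rpow_of_nonneg (by linarith) (by norm_num)]
      rw [show ((2*T):ℝ) ^ (2:ℝ) = (2*T)^(2:ℕ) by rw [← Real.rpow_natCast (2*T) 2]; norm_num]
      ring_nf
    rw [h4, hV, hc16]
    calc ENNReal.ofReal (β * (1 - 2 * β) / 2) * (16 * N1 ^ (2:ℝ) * K * ENNReal.ofReal (T/2)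
          * ENNReal.ofReal T)
        = N1 ^ (2:ℝ) * (16 * (ENNReal.ofReal (β * (1 - 2 * β) / 2) * K
            * ENNReal.ofReal (T/2) * ENNReal.ofReal T)) := by ring
      _ ≤ N1 ^ (2:ℝ) * (16 * (ENNReal.ofReal (β * (1 - 2 * β) / 2)
            * ENNReal.ofReal (2 / (1 - 2*β)) * ENNReal.ofReal (T/2) * ENNReal.ofReal T)) := by
          apply mul_le_mul_right
          apply mul_le_mul_right
          exact mul_le_mul_left (mul_le_mul_left (mul_le_mul_right hKle _) _) _
      _ ≤ N1 ^ (2:ℝ) * ENNReal.ofReal (4*T^2) := by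
          apply mul_le_mul_right
          have hn1 : (0:ℝ) ≤ β * (1 - 2 * β) / 2 := by nlinarith
          have hn2 : (0:ℝ) ≤ β * (1 - 2 * β) / 2 * (2 / (1 - 2*β)) := by positivity
          have hn3 : (0:ℝ) ≤ β * (1 - 2 * β) / 2 * (2 / (1 - 2*β)) * (T/2) := by positivity
          rw [← ENNReal.ofReal_mul hn1, ← ENNReal.ofReal_mul hn2,
            ← ENNReal.ofReal_mul hn3,
            show (16:ℝ≥0∞) = ENNReal.ofReal 16 by simp,
            ← ENNReal.ofReal_mul (by norm_num)]
          apply ENNReal.ofReal_le_ofReal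
          have hc : β * (1 - 2 * β) / 2 * (2 / (1 - 2*β)) = β := by
            field_simp
            exact mul_div_cancel_right₀ β (ne_of_gt (by linarith))
          calc 16 * (β * (1 - 2 * β) / 2 * (2 / (1 - 2*β)) * (T/2) * T)
              = 8 * β * T^2 := by rw [hc]; ring
            _ ≤ 4*T^2 := by nlinarith [sq_nonneg T]
  calc (ENNReal.ofReal (β * (1 - 2 * β) / 2) *
      ∫⁻ s in Set.Ioc (0:ℝ) t, ∫⁻ y : ℝ, ∫⁻ z : ℝ,
        ENNReal.ofReal ((waveKernel (t - s) (x - y)) ^ 2) *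
          (∫⁻ ω, ENNReal.ofReal (|Y s y ω - Y s z ω| ^ p) ∂P) ^ (2 / p) *
          ENNReal.ofReal (|y - z| ^ (2 * β - 2))) ^ (1 / (2:ℝ))
      ≤ (ENNReal.ofReal (β * (1 - 2 * β) / 2) * (Ia + V * ENNReal.ofReal T)) ^ (1 / (2:ℝ)) :=
        ENNReal.rpow_le_rpow (mul_le_mul_right hstep1 _) (by norm_num)
    _ ≤ ((2 * N2a) ^ (2:ℝ) + (ENNReal.ofReal (2*T) * N1) ^ (2:ℝ)) ^ (1 / (2:ℝ)) := by
        apply ENNReal.rpow_le_rpow _ (by norm_num)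
        rw [mul_add]
        apply add_le_add
        · calc ENNReal.ofReal (β * (1 - 2 * β) / 2) * Ia
              ≤ 2 * ENNReal.ofReal (α * (1 - 2 * α) / 2) * Ia := mul_le_mul_left hba _
            _ = 2 * (ENNReal.ofReal (α * (1 - 2 * α) / 2) * Ia) := by ring
            _ ≤ 2 * N2a ^ (2:ℝ) := mul_le_mul_right h2a _
            _ ≤ (2 * N2a) ^ (2:ℝ) := by
                rw [ENNReal.mul_rpow_of_nonneg _ _ (by norm_num)]
                apply mul_le_mul_left
                calc (2:ℝ≥0∞) = 2 ^ (1:ℝ) := by rw [ENNReal.rpow_one]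
                  _ ≤ 2 ^ (2:ℝ) := ENNReal.rpow_le_rpow_of_exponent_le one_le_two one_le_two
        · exact hVT
    _ ≤ 2 * N2a + ENNReal.ofReal (2*T) * N1 :=
        ENNReal.rpow_add_rpow_le_add _ _ one_le_two

/-- Sobolev-type embedding `χᵖ_α ↪ χᵖ_β` (wave kernel): for `2 ≤ p`, `T > 0` there are
finite constants `C`, `C̃`, depending only on `p` and `T`, such that for all
`1/4 < α ≤ β < 1/2` and all jointly measurable `Y`,
`‖Y‖_{χᵖ_β} ≤ C ‖Y‖_{χᵖ_α}` and `sup_{β' ∈ [α,1/2)} ‖Y‖_{χᵖ_{β',2}} ≤ C̃ ‖Y‖_{χᵖ_α}`. -/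
theorem sobolev_embedding_chi_wave {Ω : Type*} [MeasurableSpace Ω] (P : Measure Ω)
    [IsProbabilityMeasure P] (p T : ℝ) (hp : 2 ≤ p) (hT : 0 < T) :
    ∃ C C' : ℝ≥0∞, C ≠ ⊤ ∧ C' ≠ ⊤ ∧
      ∀ α β : ℝ, 1 / 4 < α → α ≤ β → β < 1 / 2 →
        ∀ Y : ℝ → ℝ → Ω → ℝ,
          Measurable (fun q : (ℝ × ℝ) × Ω => Y q.1.1 q.1.2 q.2) →
          (chiNormOne P p T Y + chiNormTwo P waveKernel p T β Y
              ≤ C * (chiNormOne P p T Y + chiNormTwo P waveKernel p T α Y)) ∧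
          ((⨆ β' ∈ Set.Ico α (1 / 2 : ℝ), chiNormTwo P waveKernel p T β' Y)
              ≤ C' * (chiNormOne P p T Y + chiNormTwo P waveKernel p T α Y)) := by
  refine ⟨3 + ENNReal.ofReal (2*T), 2 + ENNReal.ofReal (2*T),
    ENNReal.add_ne_top.mpr ⟨by norm_num, ENNReal.ofReal_ne_top⟩,
    ENNReal.add_ne_top.mpr ⟨by norm_num, ENNReal.ofReal_ne_top⟩, ?_⟩
  intro α β hα hab hβ Y hY
  set N1 := chiNormOne P p T Y with hN1
  set N2a := chiNormTwo P waveKernel p T α Y with hN2a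
  have hkey := chiNormTwo_key P p T hp hT hα hab hβ Y hY
  constructor
  · calc N1 + chiNormTwo P waveKernel p T β Y
        ≤ N1 + (2 * N2a + ENNReal.ofReal (2*T) * N1) := add_le_add_right hkey _
      _ = (1 + ENNReal.ofReal (2*T)) * N1 + 2 * N2a := by ring
      _ ≤ (3 + ENNReal.ofReal (2*T)) * N1 + (3 + ENNReal.ofReal (2*T)) * N2a := by
          apply add_le_add
          · exact mul_le_mul_left (add_le_add_left (by norm_num) _) _
          · exact mul_le_mul_left (le_trans (by norm_num) le_self_add) _
      _ = (3 + ENNReal.ofReal (2*T)) * (N1 + N2a) := by ring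
  · apply iSup₂_le; intro β' hβ'
    calc chiNormTwo P waveKernel p T β' Y
        ≤ 2 * N2a + ENNReal.ofReal (2*T) * N1 :=
          chiNormTwo_key P p T hp hT hα hβ'.1 hβ'.2 Y hY
      _ ≤ (2 + ENNReal.ofReal (2*T)) * N2a + (2 + ENNReal.ofReal (2*T)) * N1 :=
          add_le_add (mul_le_mul_left le_self_add _) (mul_le_mul_left le_add_self _)
      _ = (2 + ENNReal.ofReal (2*T)) * (N1 + N2a) := by ring
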